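/- Let A be an n×n Hermitian positive definite complex matrix whose minimum eigenvalue λ_1 and maximum eigenvalue λ_n satisfy 0 < λ_1 < λ_n, let T ≥ 1 be an integer, and let γ_t^{ch} (t = 0,…,T−1) be the Chebyshev steps of length T on [λ_1, λ_n]. Set Q := ∏_{t=0}^{T−1}(I_n − γ_t^{ch} A). Then for every initial vector x^{(0)} ∈ ℂ^n, the sequence Q^k x^{(0)} converges to the zero vector as k → ∞. That is, gradient descent on the quadratic x ↦ x^H A x / 2 with periodically repeated Chebyshev steps converges to the minimizer 0. -/

import Mathlib

/-- The Chebyshev steps of length `T` on `[a, b]`. -/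
noncomputable def chebStep (a b : ℝ) (T t : ℕ) : ℝ :=
  ((a + b) / 2 + ((b - a) / 2) * Real.cos ((2 * t + 1) * Real.pi / (2 * T)))⁻¹

section Aux

open Polynomial Real

lemma chebT_deg_coeff (n : ℕ) :
    (Polynomial.Chebyshev.T ℝ n).natDegree ≤ n ∧
      (Polynomial.Chebyshev.T ℝ n).coeff n = if n = 0 then 1 else 2 ^ (n - 1) := by
  induction n using Nat.twoStepInduction with
  | zero => simp [Polynomial.Chebyshev.T_zero]
  | one => simp [Polynomial.Chebyshev.T_one]
  | more n ih1 ih2 =>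
    have key : Polynomial.Chebyshev.T ℝ ((n + 2 : ℕ) : ℤ) =
        2 * X * Polynomial.Chebyshev.T ℝ ((n + 1 : ℕ) : ℤ)
          - Polynomial.Chebyshev.T ℝ (n : ℤ) := by
      push_cast
      exact Polynomial.Chebyshev.T_add_two ℝ n
    have h2X : (2 * X : ℝ[X]).natDegree ≤ 1 := by
      refine le_trans (Polynomial.natDegree_mul_le) ?_
      simp
    constructor
    · rw [key]
      refine le_trans (Polynomial.natDegree_sub_le _ _) ?_
      simp only [max_le_iff]
      refine ⟨le_trans (Polynomial.natDegree_mul_le) ?_, le_trans ih1.1 (by omega)⟩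
      have := ih2.1
      omega
    · rw [key, Polynomial.coeff_sub]
      have hlo : (Polynomial.Chebyshev.T ℝ (n : ℤ)).coeff (n + 2) = 0 :=
        Polynomial.coeff_eq_zero_of_natDegree_lt (by have := ih1.1; omega)
    
      have hme : (2 * X * Polynomial.Chebyshev.T ℝ ((n + 1 : ℕ) : ℤ)).coeff (n + 2)
          = 2 * (Polynomial.Chebyshev.T ℝ ((n + 1 : ℕ) : ℤ)).coeff (n + 1) := by
        rw [show (2 : ℝ[X]) = Polynomial.C 2 from (map_ofNat Polynomial.C 2).symm, mul_assoc,
          Polynomial.coeff_C_mul, Polynomial.coeff_X_mul]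
      rw [hlo, hme, ih2.2]
      simp [pow_succ]
      ring

lemma chebT_factor {N : ℕ} (hN : 1 ≤ N) :
    Polynomial.Chebyshev.T ℝ N = Polynomial.C ((2:ℝ) ^ (N - 1)) *
      ∏ t ∈ Finset.range N, (X - Polynomial.C (Real.cos ((2 * t + 1) * π / (2 * N)))) := by
  set θ : ℕ → ℝ := fun t => (2 * t + 1) * π / (2 * N) with hθ
  have hNpos : (0:ℝ) < N := by exact_mod_cast hN
  have hθmem : ∀ t ∈ Finset.range N, θ t ∈ Set.Icc 0 π := by
    intro t ht
    simp only [Finset.mem_range] at ht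
    constructor
    · positivity
    · rw [div_le_iff₀ (by positivity)]
      have h2t : (2 * (t:ℝ) + 1) ≤ 2 * N := by
        have : (t:ℝ) + 1 ≤ N := by exact_mod_cast ht
        linarith
      nlinarith [pi_pos]
  have hθinj : Set.InjOn (fun t => Real.cos (θ t)) (Finset.range N) := by
    intro t1 h1 t2 h2 h
    have := Real.injOn_cos (hθmem t1 h1) (hθmem t2 h2) h
    simp only [hθ] at this
    have hπ := Real.pi_ne_zero
    field_simp at this
    exact_mod_cast (by linarith : (t1:ℝ) = t2)
  set p : ℝ[X] := Polynomial.Chebyshev.T ℝ N - Polynomial.C ((2:ℝ) ^ (N - 1)) *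
      ∏ t ∈ Finset.range N, (X - Polynomial.C (Real.cos (θ t))) with hp
  have hprodmonic : (∏ t ∈ Finset.range N, (X - Polynomial.C (Real.cos (θ t)))).Monic :=
    Polynomial.monic_prod_of_monic _ _ fun t _ => Polynomial.monic_X_sub_C _
  have hproddeg : (∏ t ∈ Finset.range N, (X - Polynomial.C (Real.cos (θ t)))).natDegree = N := by
    rw [Polynomial.natDegree_prod _ _ (fun t _ => Polynomial.X_sub_C_ne_zero _)]
    simp [Polynomial.natDegree_X_sub_C]
  have heval : ∀ t ∈ Finset.range N, p.eval (Real.cos (θ t)) = 0 := by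
    intro t ht
    have h1 : (Polynomial.Chebyshev.T ℝ N).eval (Real.cos (θ t)) = 0 := by
      rw [Polynomial.Chebyshev.T_real_cos]
      rw [Real.cos_eq_zero_iff]
      refine ⟨t, ?_⟩
      push_cast [hθ]
      field_simp
    have h2 : (∏ s ∈ Finset.range N, (X - Polynomial.C (Real.cos (θ s)))).eval
        (Real.cos (θ t)) = 0 := by
      rw [Polynomial.eval_prod]
      exact Finset.prod_eq_zero ht (by simp)
    simp [hp, h1, h2]
  have hcoeffN : p.coeff N = 0 := by
    have h1 := (chebT_deg_coeff N).2
    rw [if_neg (by omega)] at h1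
    have h2 : (Polynomial.C ((2:ℝ) ^ (N - 1)) *
        ∏ t ∈ Finset.range N, (X - Polynomial.C (Real.cos (θ t)))).coeff N = 2 ^ (N - 1) := by
      rw [Polynomial.coeff_C_mul]
      have : (∏ t ∈ Finset.range N, (X - Polynomial.C (Real.cos (θ t)))).coeff N = 1 := by
        have := hprodmonic.coeff_natDegree
        rwa [hproddeg] at this
      rw [this, mul_one]
    rw [hp, Polynomial.coeff_sub, h1, h2, sub_self]
  have hdegle : p.natDegree ≤ N := by
    refine le_trans (Polynomial.natDegree_sub_le _ _) ?_
    simp only [max_le_iff]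
    refine ⟨(chebT_deg_coeff N).1, ?_⟩
    refine le_trans (Polynomial.natDegree_mul_le) ?_
    simp [hproddeg]
  have hp0 : p = 0 := by
    by_cases h : p = 0
    · exact h
    have hdeglt : p.natDegree < N := by
      rcases lt_or_eq_of_le hdegle with h' | h'
      · exact h'
      · exfalso
        have := Polynomial.leadingCoeff_ne_zero.mpr h
        rw [Polynomial.leadingCoeff, h'] at this
        exact this hcoeffN
    refine Polynomial.eq_zero_of_natDegree_lt_card_of_eval_eq_zero' p
      ((Finset.range N).image fun t => Real.cos (θ t)) ?_ ?_
    · intro x hx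
      simp only [Finset.mem_image] at hx
      obtain ⟨t, ht, rfl⟩ := hx
      exact heval t ht
    · rwa [Finset.card_image_of_injOn hθinj, Finset.card_range]
  have := sub_eq_zero.mp hp0
  exact this

lemma chebT_cosh (N : ℕ) (s : ℝ) :
    (Polynomial.Chebyshev.T ℝ N).eval (Real.cosh s) = Real.cosh (N * s) := by
  have := Polynomial.Chebyshev.T_complex_cos ((s : ℂ) * Complex.I) (N : ℤ)
  rw [Complex.cos_mul_I] at this
  apply Complex.ofReal_injective
  rw [Polynomial.Chebyshev.complex_ofReal_eval_T, Complex.ofReal_cosh, this,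
    Complex.ofReal_cosh, ← Complex.cos_mul_I]
  push_cast
  ring_nf

lemma exists_cosh (y : ℝ) (hy : 1 < y) : ∃ s : ℝ, 0 < s ∧ Real.cosh s = y := by
  refine ⟨Real.log (y + Real.sqrt (y ^ 2 - 1)), ?_, ?_⟩
  · apply Real.log_pos
    have := Real.sqrt_nonneg (y ^ 2 - 1)
    linarith
  · have hu : (0:ℝ) < y + Real.sqrt (y ^ 2 - 1) := by
      have := Real.sqrt_nonneg (y ^ 2 - 1)
      linarith
    rw [Real.cosh_eq, Real.exp_log hu, Real.exp_neg, Real.exp_log hu]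
    have hs : Real.sqrt (y ^ 2 - 1) ^ 2 = y ^ 2 - 1 := Real.sq_sqrt (by nlinarith)
    field_simp
    nlinarith [hs]

lemma cheb_prod_abs_lt_one {a b : ℝ} (ha : 0 < a) (hab : a < b) {N : ℕ} (hN : 1 ≤ N)
    {lam : ℝ} (h1 : a ≤ lam) (h2 : lam ≤ b) :
    |∏ t ∈ Finset.range N, (1 - chebStep a b N t * lam)| < 1 := by
  set m : ℝ := (a + b) / 2 with hm
  set r : ℝ := (b - a) / 2 with hrdef
  have hr : 0 < r := by simp [hrdef]; linarith
  set θ : ℕ → ℝ := fun t => (2 * t + 1) * π / (2 * N) with hθ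
  set c : ℕ → ℝ := fun t => m + r * Real.cos (θ t) with hc
  have hca : ∀ t, a ≤ c t := by
    intro t
    have := Real.neg_one_le_cos (θ t)
    simp only [hc, hm, hrdef]
    nlinarith
  have hcpos : ∀ t, 0 < c t := fun t => lt_of_lt_of_le ha (hca t)
  -- evaluation identity
  have hev : ∀ z : ℝ, ∏ t ∈ Finset.range N, (z - Real.cos (θ t)) =
      (Polynomial.Chebyshev.T ℝ N).eval z / 2 ^ (N - 1) := by
    intro z
    have := congrArg (Polynomial.eval z) (chebT_factor hN)
    rw [Polynomial.eval_mul, Polynomial.eval_C, Polynomial.eval_prod] at this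
    simp only [Polynomial.eval_sub, Polynomial.eval_X, Polynomial.eval_C] at this
    rw [eq_div_iff (by positivity), mul_comm]
    exact this.symm
  -- rewrite factors
  have hfac : ∀ t, 1 - chebStep a b N t * lam = (c t - lam) / c t := by
    intro t
    have : chebStep a b N t = (c t)⁻¹ := rfl
    rw [this]
    rw [inv_mul_eq_div, sub_div, div_self (ne_of_gt (hcpos t))]
  have hprod : ∏ t ∈ Finset.range N, (1 - chebStep a b N t * lam) =
      (∏ t ∈ Finset.range N, (c t - lam)) / ∏ t ∈ Finset.range N, c t := by
    rw [← Finset.prod_div_distrib]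
    exact Finset.prod_congr rfl fun t _ => hfac t
  -- numerator bound
  set x : ℝ := (lam - m) / r with hx
  have hx1 : -1 ≤ x := by rw [hx, le_div_iff₀ hr]; simp [hm, hrdef]; linarith
  have hx2 : x ≤ 1 := by rw [hx, div_le_iff₀ hr]; simp [hm, hrdef]; linarith
  have hnum : |∏ t ∈ Finset.range N, (c t - lam)| ≤ r ^ N / 2 ^ (N - 1) := by
    have heq : ∀ t, c t - lam = r * (Real.cos (θ t) - x) := by
      intro t
      simp only [hc, hx]
      field_simp
      ring
    calc |∏ t ∈ Finset.range N, (c t - lam)|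
        = |∏ t ∈ Finset.range N, (r * (Real.cos (θ t) - x))| := by
          congr 1; exact Finset.prod_congr rfl fun t _ => heq t
      _ = r ^ N * ∏ t ∈ Finset.range N, |Real.cos (θ t) - x| := by
          rw [Finset.abs_prod]
          simp only [abs_mul, abs_of_pos hr]
          rw [Finset.prod_mul_distrib, Finset.prod_const, Finset.card_range]
      _ = r ^ N * |∏ t ∈ Finset.range N, (x - Real.cos (θ t))| := by
          rw [Finset.abs_prod]
          congr 1
          exact Finset.prod_congr rfl fun t _ => abs_sub_comm _ _
      _ = r ^ N * (|(Polynomial.Chebyshev.T ℝ N).eval x| / 2 ^ (N - 1)) := by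
          rw [hev, abs_div, abs_of_pos (by positivity : (0:ℝ) < 2 ^ (N - 1))]
      _ ≤ r ^ N * (1 / 2 ^ (N - 1)) := by
          have : |(Polynomial.Chebyshev.T ℝ N).eval x| ≤ 1 := by
            rw [show x = Real.cos (Real.arccos x) from (Real.cos_arccos hx1 hx2).symm,
              Polynomial.Chebyshev.T_real_cos]
            exact Real.abs_cos_le_one _
          gcongr
      _ = r ^ N / 2 ^ (N - 1) := by ring
  -- denominator
  obtain ⟨s, hs, hcosh⟩ := exists_cosh (m / r) (by rw [lt_div_iff₀ hr]; simp [hm, hrdef]; linarith)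
  have hden : ∏ t ∈ Finset.range N, c t = r ^ N / 2 ^ (N - 1) * Real.cosh (N * s) := by
    have heq : ∀ t ∈ Finset.range N, c t = r * (m / r + Real.cos (θ t)) := by
      intro t _
      simp only [hc]
      field_simp
    rw [Finset.prod_congr rfl heq, Finset.prod_mul_distrib, Finset.prod_const,
      Finset.card_range]
    have hrefl : ∏ t ∈ Finset.range N, (m / r + Real.cos (θ t)) =
        ∏ t ∈ Finset.range N, (m / r - Real.cos (θ t)) := by
      rw [← Finset.prod_range_reflect (fun j => m / r - Real.cos (θ j)) N]
      refine Finset.prod_congr rfl fun t ht => ?_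
      simp only [Finset.mem_range] at ht
      have hcast : ((N - 1 - t : ℕ) : ℝ) = (N : ℝ) - 1 - t := by
        push_cast [Nat.cast_sub (by omega : t ≤ N - 1), Nat.cast_sub (by omega : 1 ≤ N)]
        ring
      have hθeq : θ (N - 1 - t) = π - θ t := by
        simp only [hθ, hcast]
        have hNne : (N : ℝ) ≠ 0 := by positivity
        field_simp
        ring
      rw [hθeq, Real.cos_pi_sub]
      ring
    rw [hrefl, hev, ← hcosh, chebT_cosh]
    ring
  have hcosh1 : 1 < Real.cosh (N * s) := by
    rw [Real.one_lt_cosh]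
    have : (0:ℝ) < N * s := by
      have : (0:ℝ) < N := by exact_mod_cast hN
      positivity
    linarith
  have hA : (0:ℝ) < r ^ N / 2 ^ (N - 1) := by positivity
  have hdenpos : 0 < ∏ t ∈ Finset.range N, c t := Finset.prod_pos fun t _ => hcpos t
  rw [hprod, abs_div, abs_of_pos hdenpos, div_lt_one hdenpos]
  calc |∏ t ∈ Finset.range N, (c t - lam)| ≤ r ^ N / 2 ^ (N - 1) := hnum
    _ < ∏ t ∈ Finset.range N, c t := by rw [hden]; nlinarith

end Aux

section Matrices

variable {n : ℕ}

lemma conj_list_prod (U V : Matrix (Fin n) (Fin n) ℂ) (hUV : U * V = 1) (hVU : V * U = 1)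
    (g : ℕ → Fin n → ℂ) (f : ℕ → Matrix (Fin n) (Fin n) ℂ)
    (hf : ∀ t, f t = U * Matrix.diagonal (g t) * V) (N : ℕ) :
    ((List.range N).map f).prod =
      U * Matrix.diagonal (fun i => ∏ t ∈ Finset.range N, g t i) * V := by
  induction N with
  | zero => simp [hUV]
  | succ N ih =>
    rw [List.range_succ, List.map_append, List.prod_append]
    simp only [List.map_cons, List.map_nil, List.prod_cons, List.prod_nil, mul_one]
    rw [ih, hf]
    have : (U * Matrix.diagonal (fun i => ∏ t ∈ Finset.range N, g t i) * V) *
        (U * Matrix.diagonal (g N) * V) =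
        U * (Matrix.diagonal (fun i => ∏ t ∈ Finset.range N, g t i) *
          Matrix.diagonal (g N)) * V := by
      rw [show U * Matrix.diagonal (fun i => ∏ t ∈ Finset.range N, g t i) * V *
          (U * Matrix.diagonal (g N) * V) =
          U * Matrix.diagonal (fun i => ∏ t ∈ Finset.range N, g t i) * (V * U) *
            Matrix.diagonal (g N) * V by noncomm_ring, hVU]
      noncomm_ring
    rw [this, Matrix.diagonal_mul_diagonal]
    congr 1
    congr 1
    funext i
    simp [Finset.prod_range_succ]

lemma conj_pow' (U V : Matrix (Fin n) (Fin n) ℂ) (hUV : U * V = 1) (hVU : V * U = 1)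
    (d : Fin n → ℂ) (k : ℕ) :
    (U * Matrix.diagonal d * V) ^ k = U * Matrix.diagonal (fun i => d i ^ k) * V := by
  induction k with
  | zero => simp [hUV]
  | succ k ih =>
    rw [pow_succ, ih]
    rw [show U * Matrix.diagonal (fun i => d i ^ k) * V * (U * Matrix.diagonal d * V) =
        U * Matrix.diagonal (fun i => d i ^ k) * (V * U) * Matrix.diagonal d * V by
      noncomm_ring, hVU, mul_one, mul_assoc U, Matrix.diagonal_mul_diagonal]
    rw [show (fun i => d i ^ k * d i) = fun i => d i ^ (k + 1) from
      funext fun i => (pow_succ (d i) k).symm]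

end Matrices

/-- Gradient descent with periodically repeated Chebyshev steps on the quadratic
`x ↦ xᴴAx/2` converges: with `Q = ∏_{t<T}(I - γ_t^{ch} A)`, for any initial point
`x⁽⁰⁾` the sequence `Q^k x⁽⁰⁾` tends to the zero vector. -/
theorem chebyshev_gd_converges {n : ℕ} (A : Matrix (Fin n) (Fin n) ℂ)
    (hA : A.IsHermitian) (lam1 lamn : ℝ) (hpos : 0 < lam1) (hlt : lam1 < lamn)
    (hmin : ∀ i, lam1 ≤ hA.eigenvalues i) (hmax : ∀ i, hA.eigenvalues i ≤ lamn)
    (hminex : ∃ i, hA.eigenvalues i = lam1) (hmaxex : ∃ i, hA.eigenvalues i = lamn)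
    (T : ℕ) (hT : 1 ≤ T)
    (Q : Matrix (Fin n) (Fin n) ℂ)
    (hQ : Q = ((List.range T).map fun t =>
        (1 : Matrix (Fin n) (Fin n) ℂ) - (chebStep lam1 lamn T t : ℂ) • A).prod)
    (x0 : Fin n → ℂ) :
    Filter.Tendsto (fun k => (Q ^ k).mulVec x0) Filter.atTop (nhds 0) := by
  classical
  set U : Matrix (Fin n) (Fin n) ℂ := (hA.eigenvectorUnitary : Matrix (Fin n) (Fin n) ℂ) with hU
  have hUV : U * star U = 1 := (Matrix.mem_unitaryGroup_iff).mp hA.eigenvectorUnitary.2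
  have hVU : star U * U = 1 := (Matrix.mem_unitaryGroup_iff').mp hA.eigenvectorUnitary.2
  have hspec : A = U * Matrix.diagonal (fun i => (hA.eigenvalues i : ℂ)) * star U := by
    exact hA.spectral_theorem
  set g : ℕ → Fin n → ℂ := fun t i => 1 - (chebStep lam1 lamn T t : ℂ) * (hA.eigenvalues i : ℂ)
    with hg
  have hfact : ∀ t, (1 : Matrix (Fin n) (Fin n) ℂ) - (chebStep lam1 lamn T t : ℂ) • A =
      U * Matrix.diagonal (g t) * star U := by
    intro t
    have h1 : (1 : Matrix (Fin n) (Fin n) ℂ) = U * Matrix.diagonal (fun _ => (1:ℂ)) * star U := by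
      rw [Matrix.diagonal_one, mul_one, hUV]
    have h2 : (chebStep lam1 lamn T t : ℂ) • A =
        U * Matrix.diagonal (fun i => (chebStep lam1 lamn T t : ℂ) * (hA.eigenvalues i : ℂ))
          * star U := by
      rw [show (fun i => (chebStep lam1 lamn T t : ℂ) * (hA.eigenvalues i : ℂ)) =
          (chebStep lam1 lamn T t : ℂ) • (fun i => (hA.eigenvalues i : ℂ)) from rfl,
        Matrix.diagonal_smul, mul_smul_comm, smul_mul_assoc, ← hspec]
    rw [h2]
    nth_rewrite 1 [h1]
    rw [← Matrix.sub_mul, ← Matrix.mul_sub, Matrix.diagonal_sub]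
  set d : Fin n → ℂ := fun i => ∏ t ∈ Finset.range T, g t i with hd
  have hQeq : Q = U * Matrix.diagonal d * star U := by
    rw [hQ]
    exact conj_list_prod U (star U) hUV hVU g _ hfact T
  have hdlt : ∀ i, ‖d i‖ < 1 := by
    intro i
    have : d i = ((∏ t ∈ Finset.range T, (1 - chebStep lam1 lamn T t * hA.eigenvalues i) : ℝ) : ℂ) := by
      rw [hd, Complex.ofReal_prod]
      refine Finset.prod_congr rfl fun t _ => ?_
      push_cast
      ring
    rw [this, Complex.norm_real]
    exact cheb_prod_abs_lt_one hpos hlt hT (hmin i) (hmax i)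
  -- convergence
  have hpowk : ∀ k, (Q ^ k).mulVec x0 =
      U.mulVec ((Matrix.diagonal (fun i => d i ^ k)).mulVec ((star U).mulVec x0)) := by
    intro k
    rw [hQeq, conj_pow' U (star U) hUV hVU d k, Matrix.mulVec_mulVec, Matrix.mulVec_mulVec]
  have hinner : Filter.Tendsto
      (fun k => (Matrix.diagonal (fun i => d i ^ k)).mulVec ((star U).mulVec x0))
      Filter.atTop (nhds 0) := by
    rw [tendsto_pi_nhds]
    intro i
    have : ∀ k, (Matrix.diagonal (fun i => d i ^ k)).mulVec ((star U).mulVec x0) i =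
        d i ^ k * ((star U).mulVec x0) i := by
      intro k
      rw [Matrix.mulVec_diagonal]
    simp only [this, Pi.zero_apply]
    have h0 : Filter.Tendsto (fun k => d i ^ k) Filter.atTop (nhds 0) :=
      tendsto_pow_atTop_nhds_zero_of_norm_lt_one (hdlt i)
    simpa using h0.mul_const (((star U).mulVec x0) i)
  have hcont : Continuous fun v : Fin n → ℂ => U.mulVec v := by
    exact (Matrix.mulVecLin U).continuous_of_finiteDimensional
  have := (hcont.tendsto 0).comp hinner
  rw [Matrix.mulVec_zero] at this
  simpa only [hpowk, Function.comp_def] using this
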